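/- arXiv:1501.00521 — 2 statements merged into one kernel-verified Lean document; each statement's English description precedes it below -/
import Mathlib

section
/- (Theorem 3.3, two-blocks estimate) For every jump rate c and every constant C > 0, it holds that lim_{i→∞} limsup_{ε→0} limsup_{L→∞} limsup_{m→∞} sup_{σ ∈ Γ with L < |σ|_Γ ≤ ε√t_m} sup_{μ ∈ P_{m,C}} E_μ | η̄_{o,i} − η̄_{σ̄o,i} | = 0, where σ̄o denotes the image of σo in V_m. -/
open Filter Pointwise

namespace Tower

variable {Γ : Type} [Group Γ] [DecidableEq Γ]

/-- The ball of radius `n` about the identity in the Cayley graph of `(Γ, S)`, as a `Finset`: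
products of at most `n` elements of `S`. -/
def ballF (S : Finset Γ) : ℕ → Finset Γ
  | 0 => {1}
  | n + 1 => ballF S n ∪ ballF S n * S

lemma one_mem_ballF (S : Finset Γ) (n : ℕ) : (1 : Γ) ∈ ballF S n := by
  induction n with
  | zero => simp [ballF]
  | succ n ih => exact Finset.mem_union_left _ ih

/-- The word norm of `x` with respect to `S`. -/
noncomputable def wordNorm (S : Finset Γ) (x : Γ) : ℕ := sInf {n | x ∈ ballF S n}

/-- `(F i)` is a Følner sequence for `(Γ, S)`. -/
def IsFolner (S : Finset Γ) (F : ℕ → Finset Γ) : Prop :=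
  (∀ i, (F i).Nonempty) ∧
    Tendsto (fun i => (((F i * S) \ F i).card : ℝ) / (F i).card) atTop (nhds 0)

/-- `b(K)`: the largest `i` such that `F i` is contained in the ball of radius `K` about `o`. -/
noncomputable def bFol (S : Finset Γ) (F : ℕ → Finset Γ) (K : ℝ) : ℕ :=
  sSup {i | ∀ x ∈ F i, (wordNorm S x : ℝ) ≤ K}

/-- Exchange the values of a configuration at two coordinates. -/
def exch {α : Type} [DecidableEq α] (x y : α) (η : α → Bool) : α → Bool :=
  fun z => if z = x then η y else if z = y then η x else η z

/-- Exchange of values at two coordinates, on configurations restricted to a `Finset`. -/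
def exchOn {α : Type} [DecidableEq α] (A : Finset α) (x y : α)
    (ζ : {a // a ∈ A} → Bool) : {a // a ∈ A} → Bool :=
  fun z => if (z : α) = x then (if h : y ∈ A then ζ ⟨y, h⟩ else ζ z)
    else if (z : α) = y then (if h : x ∈ A then ζ ⟨x, h⟩ else ζ z) else ζ z

/-- The type of generators. -/
abbrev Gen (S : Finset Γ) : Type _ := {s : Γ // s ∈ S}

/-- A `Γ`-invariant local function bundle for vertices `f : V × Z → ℝ` on the Cayley graph
`X = (V, E)` of `(Γ, S)`, `V = Γ`, `Z = {0,1}^V`. -/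
structure LocalBundleV (S : Finset Γ) : Type _ where
  f : Γ → (Γ → Bool) → ℝ
  r : ℕ
  localized : ∀ (x : Γ) (η η' : Γ → Bool),
    (∀ z ∈ (ballF S r).image (x * ·), η z = η' z) → f x η = f x η'
  invariant : ∀ (σ x : Γ) (η : Γ → Bool), f (σ * x) (fun z => η (σ⁻¹ * z)) = f x η

/-- A jump rate: a symmetric, non-degenerate `Γ`-invariant local function bundle for edges,
an edge being encoded as a pair `(x, s) : Γ × Gen S` with origin `x` and terminus `x * s`. -/
structure JumpRate (S : Finset Γ) : Type _ where
  c : Γ → Gen S → (Γ → Bool) → ℝ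
  c₀ : ℝ
  c₀_pos : 0 < c₀
  nondeg : ∀ x s η, c₀ ≤ c x s η
  r : ℕ
  localized : ∀ (x : Γ) (s : Gen S) (η η' : Γ → Bool),
    (∀ z ∈ (ballF S r).image (x * ·) ∪ (ballF S r).image (x * (s : Γ) * ·), η z = η' z) →
      c x s η = c x s η'
  invariant : ∀ (σ x : Γ) (s : Gen S) (η : Γ → Bool),
    c (σ * x) s (fun z => η (σ⁻¹ * z)) = c x s η
  symm_rev : ∀ (x : Γ) (s : Gen S) (h : (s : Γ)⁻¹ ∈ S) (η : Γ → Bool),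
    c (x * (s : Γ)) ⟨(s : Γ)⁻¹, h⟩ η = c x s η
  symm_exch : ∀ (x : Γ) (s : Gen S) (η : Γ → Bool),
    c x s (exch x (x * (s : Γ)) η) = c x s η

/-- `ρ`-Bernoulli weight on `{0,1}`. -/
def bw (ρ : ℝ) (b : Bool) : ℝ := if b then ρ else 1 - ρ

/-- Expectation with respect to the `ρ`-Bernoulli product measure `ν_ρ` of a cylinder function
depending only on the coordinates in the finite set `A`. -/
noncomputable def expCyl (ρ : ℝ) (A : Finset Γ) (g : (Γ → Bool) → ℝ) : ℝ :=
  ∑ ζ : ({a // a ∈ A} → Bool),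
    (∏ a : {a // a ∈ A}, bw ρ (ζ a)) *
      g (fun z => if h : z ∈ A then ζ ⟨z, h⟩ else false)

/-- The global average `⟨f_o⟩(ρ) = E_{ν_ρ}[f_o]`. -/
noncomputable def globalAvg {S : Finset Γ} (f : LocalBundleV S) (ρ : ℝ) : ℝ :=
  expCyl ρ (ballF S f.r) (f.f 1)

section Quot

variable (N : Subgroup Γ)

/-- The configuration space `Z_m = {0,1}^{V_m}` over the quotient graph `X_m = Γ_m \ X`. -/
abbrev Conf (N : Subgroup Γ) : Type _ := (Γ ⧸ N) → Bool

/-- The `Γ_m`-periodic extension of a configuration on `X_m` to `X`. -/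
def liftZ (η : Conf N) : Γ → Bool := fun x => η (QuotientGroup.mk x)

/-- The function on `V_m × Z_m` induced by a local function bundle. -/
noncomputable def fQ {S : Finset Γ} (f : LocalBundleV S) (v : Γ ⧸ N) (η : Conf N) : ℝ :=
  f.f (Quotient.out v) (liftZ N η)

/-- The jump rate induced on the quotient graph, on the edge `(v, v * s)`. -/
noncomputable def cQ {S : Finset Γ} (c : JumpRate S) (v : Γ ⧸ N) (s : Gen S) (η : Conf N) : ℝ :=
  c.c (Quotient.out v) s (liftZ N η)

variable [N.Normal]

/-- `η^e` on the quotient, for the edge `e = (v, v * s)`. -/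
def exchQ [DecidableEq (Γ ⧸ N)] (v : Γ ⧸ N) (s : Γ) (η : Conf N) : Conf N :=
  exch v (v * QuotientGroup.mk s) η

/-- The graph distance on the quotient graph `X_m`. -/
noncomputable def distQ (S : Finset Γ) (v w : Γ ⧸ N) : ℕ :=
  sInf {n | ∃ x ∈ ballF S n, v * QuotientGroup.mk x = w}

/-- The diameter of the quotient graph `X_m`. -/
noncomputable def diamQ (S : Finset Γ) : ℕ :=
  sSup {k | ∃ v w : Γ ⧸ N, distQ N S v w = k}

variable [Fintype (Γ ⧸ N)] [DecidableEq (Γ ⧸ N)]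

/-- `μ` is a probability measure on the finite configuration space `Z_m`. -/
def IsProb (μ : Conf N → ℝ) : Prop := (∀ η, 0 ≤ μ η) ∧ ∑ η, μ η = 1

/-- The action of `Γ/Γ_m` on `Z_m`. -/
def actQ (σ : Γ ⧸ N) (η : Conf N) : Conf N := fun z => η (σ⁻¹ * z)

/-- `μ` is `Γ/Γ_m`-invariant. -/
def IsInvariant (μ : Conf N → ℝ) : Prop := ∀ σ η, μ (actQ N σ η) = μ η

/-- The uniform ((1/2)-Bernoulli) measure `ν_m` on `Z_m`. -/
noncomputable def nuU : Conf N → ℝ := fun _ => (Fintype.card (Conf N) : ℝ)⁻¹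

/-- The density `φ = dμ/dν_m`. -/
noncomputable def dens (μ : Conf N → ℝ) : Conf N → ℝ :=
  fun η => (Fintype.card (Conf N) : ℝ) * μ η

/-- `√φ` where `φ = dμ/dν_m`. -/
noncomputable def sqrtDens (μ : Conf N → ℝ) : Conf N → ℝ :=
  fun η => Real.sqrt (dens N μ η)

/-- Expectation with respect to a probability measure on `Z_m`. -/
noncomputable def Emeas (μ : Conf N → ℝ) (g : Conf N → ℝ) : ℝ := ∑ η, μ η * g η

/-- The generator `L_m F (η) = Σ_{e ∈ E_m} c(e,η) (F(η^e) - F(η))`. -/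
noncomputable def Lgen {S : Finset Γ} (c : JumpRate S) (F : Conf N → ℝ) (η : Conf N) : ℝ :=
  ∑ e : (Γ ⧸ N) × Gen S, cQ N c e.1 e.2 η * (F (exchQ N e.1 (e.2 : Γ) η) - F η)

/-- The Dirichlet form `I_m(μ) = -∫ √φ L_m √φ dν_m`. -/
noncomputable def ImGen {S : Finset Γ} (c : JumpRate S) (μ : Conf N → ℝ) : ℝ :=
  - ∑ η, nuU N η * (sqrtDens N μ η * Lgen N c (sqrtDens N μ) η)

/-- The Dirichlet form in sum form:
`I_m(μ) = (1/2) Σ_{e ∈ E_m} ∫ c(e,η) (π_e √φ)² dν_m`. -/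
noncomputable def ImSum {S : Finset Γ} (c : JumpRate S) (μ : Conf N → ℝ) : ℝ :=
  (1 / 2) * ∑ e : (Γ ⧸ N) × Gen S, ∑ η, nuU N η *
    (cQ N c e.1 e.2 η * (sqrtDens N μ (exchQ N e.1 (e.2 : Γ) η) - sqrtDens N μ η) ^ 2)

/-- The local average `f̄_{v,i}` on the quotient, over the Følner set `Fi`. -/
noncomputable def fbarQ {S : Finset Γ} (f : LocalBundleV S) (Fi : Finset Γ) (v : Γ ⧸ N)
    (η : Conf N) : ℝ :=
  ((Fi.card : ℝ))⁻¹ * ∑ σ ∈ Fi, fQ N f (QuotientGroup.mk σ * v) η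

/-- The local particle density `η̄_{v,i}` on the quotient, over the Følner set `Fi`. -/
noncomputable def etabarQ (Fi : Finset Γ) (v : Γ ⧸ N) (η : Conf N) : ℝ :=
  ((Fi.card : ℝ))⁻¹ * ∑ σ ∈ Fi, (if η (QuotientGroup.mk σ * v) then (1 : ℝ) else 0)

/-- The image of `E⁰ = {e ∈ E : oe = o or te = o}` in `E_m`. -/
def E0Q (S : Finset Γ) : Finset ((Γ ⧸ N) × Gen S) :=
  Finset.univ.filter fun e => e.1 = 1 ∨ e.1 * QuotientGroup.mk (e.2 : Γ) = 1

/-- The marginal `μ|_Λ` on `Z_Λ = {0,1}^A` of a measure on `Z_m` (identified with its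
`Γ_m`-periodic extension). -/
noncomputable def marg (A : Finset Γ) (μ : Conf N → ℝ) (ζ : {a // a ∈ A} → Bool) : ℝ :=
  ∑ η : Conf N, if (∀ a : {a // a ∈ A}, liftZ N η (a : Γ) = ζ a) then μ η else 0

/-- The density `φ_Λ = d(μ|_Λ)/dν_Λ`. -/
noncomputable def margDens (A : Finset Γ) (μ : Conf N → ℝ) (ζ : {a // a ∈ A} → Bool) : ℝ :=
  (Fintype.card ({a // a ∈ A} → Bool) : ℝ) * marg N A μ ζ

/-- The restricted Dirichlet form
`I°_Λ(μ) = (1/2) Σ_{e ∈ E_Λ} ∫_{Z_Λ} (π_e √φ_Λ)² dν_Λ` for the subgraph `Λ = (A, Eset)`. -/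
noncomputable def IrestV {S : Finset Γ} (A : Finset Γ) (Eset : Finset (Γ × Gen S))
    (μ : Conf N → ℝ) : ℝ :=
  (1 / 2) * ∑ e ∈ Eset, ∑ ζ : ({a // a ∈ A} → Bool),
    (Fintype.card ({a // a ∈ A} → Bool) : ℝ)⁻¹ *
      (Real.sqrt (margDens N A μ (exchOn A e.1 (e.1 * (e.2 : Γ)) ζ)) -
        Real.sqrt (margDens N A μ ζ)) ^ 2

/-- The marginal on `Z_Λ × Z_Λ` of the pushforward `σ̂μ` of `μ` under `η ↦ (η, σ⁻¹η)`. -/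
noncomputable def margTwo (σ : Γ) (A : Finset Γ) (μ : Conf N → ℝ)
    (ζ ζ' : {a // a ∈ A} → Bool) : ℝ :=
  ∑ η : Conf N,
    if ((∀ a : {a // a ∈ A}, liftZ N η (a : Γ) = ζ a) ∧
        (∀ a : {a // a ∈ A}, liftZ N η (σ * (a : Γ)) = ζ' a)) then μ η else 0

/-- The density of `(σ̂μ)|_{Λ×Λ}` with respect to `ν_Λ ⊗ ν_Λ`. -/
noncomputable def margTwoDens (σ : Γ) (A : Finset Γ) (μ : Conf N → ℝ)
    (ζ ζ' : {a // a ∈ A} → Bool) : ℝ :=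
  ((Fintype.card ({a // a ∈ A} → Bool) : ℝ)) ^ 2 * margTwo N σ A μ ζ ζ'

/-- `I^{(o,o)}_{Λ×Λ}(σ̂μ) = (1/2) ∫ (π̃_{o,o} √(d(σ̂μ)|_{Λ×Λ}/d(ν_Λ⊗ν_Λ)))² d(ν_Λ⊗ν_Λ)`. -/
noncomputable def Ioo (σ : Γ) (A : Finset Γ) (h1 : (1 : Γ) ∈ A) (μ : Conf N → ℝ) : ℝ :=
  (1 / 2) * ∑ ζ : ({a // a ∈ A} → Bool), ∑ ζ' : ({a // a ∈ A} → Bool),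
    (((Fintype.card ({a // a ∈ A} → Bool) : ℝ)) ^ 2)⁻¹ *
      (Real.sqrt (margTwoDens N σ A μ (Function.update ζ ⟨1, h1⟩ (ζ' ⟨1, h1⟩))
          (Function.update ζ' ⟨1, h1⟩ (ζ ⟨1, h1⟩))) -
        Real.sqrt (margTwoDens N σ A μ ζ ζ')) ^ 2

/-- The two-block restricted Dirichlet form `I°_{Λ×Λ}(σ̂μ)`, i.e. the Dirichlet form of
`L°_Λ ⊗ 1 + 1 ⊗ L°_Λ` of the square root of the density of `(σ̂μ)|_{Λ×Λ}`. -/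
noncomputable def ItwoRest {S : Finset Γ} (σ : Γ) (A : Finset Γ) (Eset : Finset (Γ × Gen S))
    (μ : Conf N → ℝ) : ℝ :=
  (1 / 2) * ∑ e ∈ Eset, ∑ ζ : ({a // a ∈ A} → Bool), ∑ ζ' : ({a // a ∈ A} → Bool),
    (((Fintype.card ({a // a ∈ A} → Bool) : ℝ)) ^ 2)⁻¹ *
      ((Real.sqrt (margTwoDens N σ A μ (exchOn A e.1 (e.1 * (e.2 : Γ)) ζ) ζ') -
          Real.sqrt (margTwoDens N σ A μ ζ ζ')) ^ 2 +
        (Real.sqrt (margTwoDens N σ A μ ζ (exchOn A e.1 (e.1 * (e.2 : Γ)) ζ')) -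
          Real.sqrt (margTwoDens N σ A μ ζ ζ')) ^ 2)

end Quot

/-- The edge set `E_Λ` of the subgraph `Λ` spanned by the ball of radius `K`. -/
def ELam (S : Finset Γ) (K : ℕ) : Finset (Γ × Gen S) :=
  (ballF S K ×ˢ (Finset.univ : Finset (Gen S))).filter fun e => e.1 * (e.2 : Γ) ∈ ballF S K

end Tower

/-!
By invariance of `μ`, the bound `I_m(μ) ≤ C [Γ:Γ_m] / t_m` spreads evenly over the edges of
`X_m`, so the exchange along any single edge has jump energy `√E ≤ √(2C / (c₀ t_m))`. The
exchange `v ↔ vσ` is an iterated conjugate of edge exchanges, which costs a factor `2|σ|_Γ`,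
so its energy is `O(ε)` when `|σ|_Γ ≤ ε√t_m`. In the second moment of `η̄_{o,i} - η̄_{σ̄o,i}`,
the terms of a site `b` against the sites `a` that do not see the exchange `b ↔ bσ̄` are means of
an observable that changes sign under it, hence `O(ε)`; only three `a` per `b` remain, giving
`3 / |F_i|`. So for all large `m` (once `Γ_m` meets the relevant balls trivially) the expectation
is at most `√(3 / |F_i| + O(ε))`, which vanishes as `ε → 0` and then `i → ∞`, because the
Følner sets of an infinite group grow.
-/

namespace Tower

open Finset Topology

section IteratedLimsup

variable {α ι κ ι' : Type*}

lemma limsup_mem_Icc_of_eventually_le {l : Filter α} [l.NeBot] {u : α → ℝ} {b : ℝ}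
    (h0 : ∀ x, 0 ≤ u x) (hb : ∀ᶠ x in l, u x ≤ b) : limsup u l ∈ Set.Icc 0 b :=
  ⟨le_limsup_of_frequently_le (Frequently.of_forall h0) (isBoundedUnder_of_eventually_le hb),
    limsup_le_of_le (isCoboundedUnder_le_of_le l h0) hb⟩

lemma tendsto_limsup_limsup_limsup_of_le {li : Filter ι} {lε : Filter α} {lL : Filter κ}
    {lm : Filter ι'} [lε.NeBot] [lL.NeBot] [lm.NeBot] {u : ι → α → κ → ι' → ℝ}
    {b : ι → α → ℝ} {a : ι → ℝ} (hu : ∀ i ε L m, 0 ≤ u i ε L m)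
    (hle : ∀ i ε L, ∀ᶠ m in lm, u i ε L m ≤ b i ε) (hb : ∀ i, Tendsto (b i) lε (𝓝 (a i)))
    (ha : Tendsto a li (𝓝 0)) :
    Tendsto (fun i => limsup (fun ε => limsup (fun L => limsup (fun m => u i ε L m) lm) lL) lε)
      li (𝓝 0) := by
  have hm := fun i ε L => limsup_mem_Icc_of_eventually_le (hu i ε L) (hle i ε L)
  have hL := fun i ε => limsup_mem_Icc_of_eventually_le (l := lL) (fun L => (hm i ε L).1)
    (Eventually.of_forall fun L => (hm i ε L).2)
  refine squeeze_zero (fun i => ?_) (fun i => ?_) ha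
  · exact le_limsup_of_frequently_le (Frequently.of_forall fun ε => (hL i ε).1)
      ((hb i).isBoundedUnder_le.mono_le (Eventually.of_forall fun ε => (hL i ε).2))
  · rw [← (hb i).limsup_eq]
    exact limsup_le_limsup (Eventually.of_forall fun ε => (hL i ε).2)
      (isCoboundedUnder_le_of_le lε fun ε => (hL i ε).1) (hb i).isBoundedUnder_le

end IteratedLimsup

section WordBall

variable {Γ : Type} [Group Γ] [DecidableEq Γ] {S : Finset Γ}

lemma mem_ballF_zero {x : Γ} : x ∈ ballF S 0 ↔ x = 1 := Finset.mem_singleton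

lemma mem_ballF_succ {n : ℕ} {x : Γ} :
    x ∈ ballF S (n + 1) ↔ x ∈ ballF S n ∨ ∃ y ∈ ballF S n, ∃ s ∈ S, y * s = x := by
  simp [ballF, Finset.mem_mul]

lemma ballF_mono (S : Finset Γ) : Monotone (ballF S) :=
  monotone_nat_of_le_succ fun _ => Finset.subset_union_left

lemma mul_mem_ballF_succ {n : ℕ} {x s : Γ} (hx : x ∈ ballF S n) (hs : s ∈ S) :
    x * s ∈ ballF S (n + 1) :=
  mem_ballF_succ.2 (Or.inr ⟨x, hx, s, hs, rfl⟩)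

lemma mem_ballF_one {s : Γ} (hs : s ∈ S) : s ∈ ballF S 1 := by
  simpa using mul_mem_ballF_succ (one_mem_ballF S 0) hs

lemma mul_mem_ballF_add {m n : ℕ} {x y : Γ} (hx : x ∈ ballF S m) (hy : y ∈ ballF S n) :
    x * y ∈ ballF S (m + n) := by
  induction n generalizing y with
  | zero => rwa [mem_ballF_zero.1 hy, mul_one]
  | succ n ih =>
    obtain hy | ⟨z, hz, s, hs, rfl⟩ := mem_ballF_succ.1 hy
    · exact ballF_mono S (by omega) (ih hy)
    · rw [← mul_assoc]
      exact mul_mem_ballF_succ (ih hz) hs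

lemma inv_mem_ballF (hS : ∀ s ∈ S, s⁻¹ ∈ S) {n : ℕ} {x : Γ} (hx : x ∈ ballF S n) :
    x⁻¹ ∈ ballF S n := by
  induction n generalizing x with
  | zero => simp [mem_ballF_zero.1 hx, ballF]
  | succ n ih =>
    obtain hx | ⟨y, hy, s, hs, rfl⟩ := mem_ballF_succ.1 hx
    · exact ballF_mono S n.le_succ (ih hx)
    · rw [mul_inv_rev, Nat.add_comm]
      exact mul_mem_ballF_add (mem_ballF_one (hS s hs)) (ih hy)

lemma exists_mem_ballF (hS : ∀ s ∈ S, s⁻¹ ∈ S) (hgen : Subgroup.closure (S : Set Γ) = ⊤)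
    (x : Γ) : ∃ n, x ∈ ballF S n := by
  have hx : x ∈ Subgroup.closure (S : Set Γ) := hgen ▸ Subgroup.mem_top x
  induction hx using Subgroup.closure_induction with
  | mem s hs => exact ⟨1, mem_ballF_one hs⟩
  | one => exact ⟨0, one_mem_ballF S 0⟩
  | mul x y _ _ hx hy =>
    obtain ⟨m, hx⟩ := hx
    obtain ⟨n, hy⟩ := hy
    exact ⟨m + n, mul_mem_ballF_add hx hy⟩
  | inv x _ hx => exact hx.imp fun n => inv_mem_ballF hS

lemma mem_ballF_wordNorm (hS : ∀ s ∈ S, s⁻¹ ∈ S) (hgen : Subgroup.closure (S : Set Γ) = ⊤)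
    (x : Γ) : x ∈ ballF S (wordNorm S x) :=
  Nat.sInf_mem (exists_mem_ballF hS hgen x)

lemma mul_mem_of_mul_subset {F : Finset Γ} (hF : F * S ⊆ F) {τ x : Γ} (hτ : τ ∈ F) {n : ℕ}
    (hx : x ∈ ballF S n) : τ * x ∈ F := by
  induction n generalizing x with
  | zero => rwa [mem_ballF_zero.1 hx, mul_one]
  | succ n ih =>
    obtain hx | ⟨y, hy, s, hs, rfl⟩ := mem_ballF_succ.1 hx
    · exact ih hx
    · rw [← mul_assoc]
      exact hF (Finset.mul_mem_mul (ih hy) hs)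

lemma IsFolner.tendsto_card [Infinite Γ] (hS : ∀ s ∈ S, s⁻¹ ∈ S)
    (hgen : Subgroup.closure (S : Set Γ) = ⊤) {F : ℕ → Finset Γ} (hF : IsFolner S F) :
    Tendsto (fun i => ((F i).card : ℝ)) atTop atTop := by
  -- a finite `F` with `F * S ⊆ F` would be all of the infinite group `Γ`
  have hboundary : ∀ i, 1 ≤ (((F i * S) \ F i).card : ℝ) := by
    intro i
    obtain ⟨τ, hτ⟩ := hF.1 i
    refine Nat.one_le_cast.2 (Finset.card_pos.2 (Finset.sdiff_nonempty.2 fun hsub => ?_))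
    refine Set.infinite_univ (Set.Finite.subset (F i).finite_toSet fun γ _ => ?_)
    obtain ⟨n, hn⟩ := exists_mem_ballF hS hgen (τ⁻¹ * γ)
    simpa using mul_mem_of_mul_subset hsub hτ hn
  have hinv : Tendsto (fun i => ((F i).card : ℝ)⁻¹) atTop (𝓝[>] 0) := by
    refine tendsto_nhdsWithin_iff.2 ⟨squeeze_zero (fun i => by positivity) (fun i => ?_) hF.2,
      Eventually.of_forall fun i => Set.mem_Ioi.2 (inv_pos.2 (Nat.cast_pos.2 (hF.1 i).card_pos))⟩
    rw [inv_eq_one_div]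
    gcongr
    exact hboundary i
  simpa [Function.comp_def] using tendsto_inv_nhdsGT_zero.comp hinv

end WordBall

section Subgroups

variable {Γ : Type} [Group Γ]

lemma eventually_forall_mem_subgroup_eq_one (Γs : ℕ → Subgroup Γ)
    (hdesc : ∀ m, Γs (m + 1) ≤ Γs m) (hsep : ∀ x : Γ, (∀ m, x ∈ Γs m) → x = 1)
    (A : Finset Γ) : ∀ᶠ m in atTop, ∀ x ∈ A, x ∈ Γs m → x = 1 := by
  rw [eventually_all_finset]
  intro x _
  by_cases hx : x = 1
  · exact Eventually.of_forall fun _ _ => hx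
  obtain ⟨m₀, hm₀⟩ : ∃ m₀, x ∉ Γs m₀ := by
    by_contra! h
    exact hx (hsep x h)
  filter_upwards [eventually_ge_atTop m₀] with m hm hxm
  exact absurd (antitone_nat_of_succ_le hdesc hm hxm) hm₀

lemma injOn_mk_of_forall_mem_eq_one [DecidableEq Γ] {N : Subgroup Γ} {A : Finset Γ}
    (hN : ∀ x ∈ A⁻¹ * A, x ∈ N → x = 1) :
    Set.InjOn (QuotientGroup.mk : Γ → Γ ⧸ N) A := fun _ hτ _ hτ' h =>
  inv_mul_eq_one.1 (hN _ (Finset.mul_mem_mul (Finset.inv_mem_inv hτ) hτ') (QuotientGroup.eq.1 h))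

lemma mk_eq_mk_iff_of_forall_mem_eq_one {N : Subgroup Γ} {A : Set Γ}
    (hN : ∀ x ∈ A, x ∈ N → x = 1) {y z : Γ} (h : y⁻¹ * z ∈ A) :
    (z : Γ ⧸ N) = y ↔ z = y :=
  ⟨fun e => (inv_mul_eq_one.1 (hN _ h (QuotientGroup.eq.1 e.symm))).symm, congrArg _⟩

end Subgroups

section Exchange

variable {α : Type} [DecidableEq α]

lemma exch_eq_swap (x y : α) (η : α → Bool) : exch x y η = η ∘ Equiv.swap x y := by
  funext z
  simp only [exch, Function.comp_apply, Equiv.swap_apply_def]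
  split_ifs <;> rfl

lemma exch_self (x : α) : (exch x x : (α → Bool) → α → Bool) = id := by
  funext η
  simp [exch_eq_swap]

lemma exch_involutive (x y : α) : Function.Involutive (exch x y : (α → Bool) → α → Bool) :=
  fun η => by simp [exch_eq_swap, Function.comp_assoc, ← Equiv.coe_trans]

lemma exch_eq_exch_comp_exch_comp_exch {v w t : α} (hvw : v ≠ w) (hvt : v ≠ t) :
    (exch v t : (α → Bool) → α → Bool) = exch w t ∘ exch v w ∘ exch w t := by
  funext η
  simp only [exch_eq_swap, Function.comp_apply, Function.comp_assoc]
  congr 1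
  rw [← Equiv.coe_trans, ← Equiv.coe_trans, ← Equiv.swap_comm t v,
    ← Equiv.swap_mul_swap_mul_swap hvw hvt]
  rfl

end Exchange

section JumpEnergy

variable {α : Type*} [Fintype α]

noncomputable def jumpEnergy (μ : α → ℝ) (T : α → α) : ℝ :=
  ∑ a, (√(μ (T a)) - √(μ a)) ^ 2

lemma jumpEnergy_id (μ : α → ℝ) : jumpEnergy μ id = 0 := by
  simp [jumpEnergy]

lemma sqrt_sum_sq_add_le (f g : α → ℝ) :
    √(∑ a, (f a + g a) ^ 2) ≤ √(∑ a, f a ^ 2) + √(∑ a, g a ^ 2) := by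
  simpa [EuclideanSpace.norm_eq] using
    norm_add_le (WithLp.toLp 2 f : EuclideanSpace ℝ α) (WithLp.toLp 2 g)

lemma sqrt_jumpEnergy_comp_le (μ : α → ℝ) (T : α → α) {U : α → α}
    (hU : U.Bijective) :
    √(jumpEnergy μ (T ∘ U)) ≤ √(jumpEnergy μ T) + √(jumpEnergy μ U) := by
  have hT : ∑ a, (√(μ (T (U a))) - √(μ (U a))) ^ 2 = jumpEnergy μ T :=
    hU.sum_comp fun a => (√(μ (T a)) - √(μ a)) ^ 2
  rw [← hT]
  simp only [jumpEnergy]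
  convert sqrt_sum_sq_add_le (fun a => √(μ (T (U a))) - √(μ (U a)))
    (fun a => √(μ (U a)) - √(μ a)) using 4 with a
  simp only [Function.comp_apply]
  ring

lemma sum_mul_mul_sub_comp_of_involutive {T : α → α} (hT : T.Involutive) {c : α → ℝ}
    (hc : ∀ a, c (T a) = c a) (u : α → ℝ) :
    ∑ a, c a * (u a * (u a - u (T a))) = (1 / 2) * ∑ a, c a * (u (T a) - u a) ^ 2 := by
  have hswap : ∑ a, c a * (u a * (u a - u (T a))) = ∑ a, c a * (u (T a) * (u (T a) - u a)) := by
    conv_lhs => rw [← hT.bijective.sum_comp]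
    simp [hT _, hc]
  have hsplit : ∑ a, c a * (u (T a) - u a) ^ 2
      = ∑ a, c a * (u a * (u a - u (T a))) + ∑ a, c a * (u (T a) * (u (T a) - u a)) := by
    rw [← Finset.sum_add_distrib]
    exact Finset.sum_congr rfl fun a _ => by ring
  linarith

variable {μ : α → ℝ}

lemma sum_abs_comp_sub_le (hμ0 : ∀ a, 0 ≤ μ a) (hμ1 : ∑ a, μ a = 1) {T : α → α}
    (hT : T.Bijective) :
    ∑ a, |μ (T a) - μ a| ≤ 2 * √(jumpEnergy μ T) := by
  set u := fun a => √(μ a)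
  have hu : ∀ a, μ a = u a ^ 2 := fun a => (Real.sq_sqrt (hμ0 a)).symm
  have hu1 : ∑ a, u a ^ 2 = 1 := by simpa [hu] using hμ1
  have hsum : ∑ a, (u (T a) + u a) ^ 2 ≤ 4 := calc
    ∑ a, (u (T a) + u a) ^ 2 ≤ ∑ a, 2 * (u (T a) ^ 2 + u a ^ 2) :=
      Finset.sum_le_sum fun a _ => by nlinarith [sq_nonneg (u (T a) - u a)]
    _ = 4 := by
      rw [← Finset.mul_sum, Finset.sum_add_distrib, hT.sum_comp (fun a => u a ^ 2), hu1]
      norm_num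
  calc ∑ a, |μ (T a) - μ a| = ∑ a, |u (T a) - u a| * (u (T a) + u a) := by
        refine Finset.sum_congr rfl fun a _ => ?_
        rw [hu, hu, sq_sub_sq, abs_mul, abs_of_nonneg (by positivity : 0 ≤ u (T a) + u a),
          mul_comm]
    _ ≤ √(∑ a, |u (T a) - u a| ^ 2) * √(∑ a, (u (T a) + u a) ^ 2) :=
        Real.sum_mul_le_sqrt_mul_sqrt _ _ _
    _ ≤ √(jumpEnergy μ T) * 2 := by
        simp only [sq_abs]
        exact mul_le_mul_of_nonneg_left
          (Real.sqrt_le_iff.2 ⟨zero_le_two, hsum.trans_eq (by norm_num)⟩) (Real.sqrt_nonneg _)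
    _ = 2 * √(jumpEnergy μ T) := mul_comm _ _

lemma sum_mul_le_of_le (hμ0 : ∀ a, 0 ≤ μ a) (hμ1 : ∑ a, μ a = 1) {g : α → ℝ} {M : ℝ}
    (hg : ∀ a, g a ≤ M) : ∑ a, μ a * g a ≤ M := calc
  ∑ a, μ a * g a ≤ ∑ a, μ a * M := Finset.sum_le_sum fun a _ => by gcongr; exacts [hμ0 a, hg a]
  _ = M := by rw [← Finset.sum_mul, hμ1, one_mul]

lemma abs_sum_mul_comp_sub_le [Nonempty α] (hμ0 : ∀ a, 0 ≤ μ a) (hμ1 : ∑ a, μ a = 1)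
    {T : α → α} (hT : T.Involutive) {f : α → ℝ} {M : ℝ} (hf : ∀ a, |f a| ≤ M) :
    |∑ a, μ a * f (T a) - ∑ a, μ a * f a| ≤ 2 * M * √(jumpEnergy μ T) := by
  have hswap : ∑ a, μ a * f (T a) = ∑ a, μ (T a) * f a := by
    conv_lhs => rw [← hT.bijective.sum_comp]
    simp [hT _]
  rw [hswap, ← Finset.sum_sub_distrib]
  calc |∑ a, (μ (T a) * f a - μ a * f a)| ≤ ∑ a, |μ (T a) - μ a| * M := by
        refine (Finset.abs_sum_le_sum_abs _ _).trans (Finset.sum_le_sum fun a _ => ?_)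
        rw [← sub_mul, abs_mul]
        exact mul_le_mul_of_nonneg_left (hf a) (abs_nonneg _)
    _ ≤ 2 * √(jumpEnergy μ T) * M := by
        rw [← Finset.sum_mul]
        exact mul_le_mul_of_nonneg_right (sum_abs_comp_sub_le hμ0 hμ1 hT.bijective)
          ((abs_nonneg _).trans (hf (Classical.arbitrary α)))
    _ = 2 * M * √(jumpEnergy μ T) := by ring

lemma abs_sum_mul_le_of_comp_eq_neg [Nonempty α] (hμ0 : ∀ a, 0 ≤ μ a) (hμ1 : ∑ a, μ a = 1)
    {T : α → α} (hT : T.Involutive) {g : α → ℝ} (hg : ∀ a, g (T a) = -g a) {M : ℝ}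
    (hM : ∀ a, |g a| ≤ M) :
    |∑ a, μ a * g a| ≤ M * √(jumpEnergy μ T) := by
  have h := abs_sum_mul_comp_sub_le hμ0 hμ1 hT hM
  simp only [hg, mul_neg, Finset.sum_neg_distrib] at h
  rw [← neg_add', abs_neg, ← two_mul, abs_mul, abs_two] at h
  linarith

lemma sum_mul_abs_le_sqrt (hμ0 : ∀ a, 0 ≤ μ a) (hμ1 : ∑ a, μ a = 1) (X : α → ℝ) :
    ∑ a, μ a * |X a| ≤ √(∑ a, μ a * X a ^ 2) := by
  refine (le_abs_self _).trans (Real.abs_le_sqrt ?_)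
  have h := Finset.sum_sq_le_sum_mul_sum_of_sq_le_mul Finset.univ (fun a _ => hμ0 a)
    (fun a _ => mul_nonneg (hμ0 a) (sq_nonneg (X a)))
    (r := fun a => μ a * |X a|) (fun a _ => (by rw [mul_pow, sq_abs]; ring : _ = _).le)
  rwa [hμ1, one_mul] at h

end JumpEnergy

section QuotientRate

variable {Γ : Type} [Group Γ] (N : Subgroup Γ)

lemma liftZ_exch_apply [DecidableEq Γ] [DecidableEq (Γ ⧸ N)] {x y z : Γ}
    (hx : (z : Γ ⧸ N) = x ↔ z = x) (hy : (z : Γ ⧸ N) = y ↔ z = y) (η : Conf N) :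
    liftZ N (exch (x : Γ ⧸ N) y η) z = exch x y (liftZ N η) z := by
  simp only [liftZ, exch, hx, hy]

variable [N.Normal]

lemma liftZ_mul_of_mem {γ : Γ} (hγ : γ ∈ N) (η : Conf N) :
    (fun z => liftZ N η (γ * z)) = liftZ N η := by
  funext z
  simp [liftZ, (QuotientGroup.eq_one_iff γ).2 hγ]

lemma liftZ_actQ (g : Γ) (η : Conf N) :
    liftZ N (actQ N g η) = fun z => liftZ N η (g⁻¹ * z) := by
  funext z
  simp [liftZ, actQ]

lemma actQ_bijective (g : Γ ⧸ N) : (actQ N g).Bijective := by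
  refine Function.bijective_iff_has_inverse.2 ⟨actQ N g⁻¹, fun η => ?_, fun η => ?_⟩ <;>
    funext z <;> simp [actQ]

lemma exchQ_actQ [DecidableEq (Γ ⧸ N)] (g v : Γ ⧸ N) (s : Γ) (η : Conf N) :
    exchQ N (g * v) s (actQ N g η) = actQ N g (exchQ N v s η) := by
  funext z
  simp only [exchQ, exch, actQ, inv_mul_eq_iff_eq_mul, mul_assoc, inv_mul_cancel_left]

variable [DecidableEq Γ] {S : Finset Γ}

lemma cQ_mk (c : JumpRate S) (x : Γ) (s : Gen S) (η : Conf N) :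
    cQ N c x s η = c.c x s (liftZ N η) := by
  obtain ⟨n, hn⟩ := QuotientGroup.mk_out_eq_mul N x
  have hδ : x * n * x⁻¹ ∈ N := ‹N.Normal›.conj_mem n n.2 x
  calc cQ N c x s η = c.c (x * n * x⁻¹ * x) s (liftZ N η) := by rw [cQ, hn]; group
    _ = c.c (x * n * x⁻¹ * x) s (fun z => liftZ N η ((x * n * x⁻¹)⁻¹ * z)) := by
      rw [liftZ_mul_of_mem N (N.inv_mem hδ)]
    _ = c.c x s (liftZ N η) := c.invariant _ _ _ _

lemma cQ_actQ (c : JumpRate S) (g v : Γ ⧸ N) (s : Gen S) (η : Conf N) :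
    cQ N c (g * v) s (actQ N g η) = cQ N c v s η := by
  induction g using QuotientGroup.induction_on with | H g => ?_
  induction v using QuotientGroup.induction_on with | H x => ?_
  rw [← QuotientGroup.mk_mul, cQ_mk, cQ_mk, liftZ_actQ, c.invariant]

/-- Once `N` meets the `(c.r + 1)`-ball trivially, the exchange on the quotient agrees near the
edge with the exchange on `Γ`, so locality and `c.symm_exch` apply. -/
lemma cQ_exchQ [DecidableEq (Γ ⧸ N)] (c : JumpRate S) (hS : ∀ s ∈ S, s⁻¹ ∈ S)
    (hN : ∀ γ ∈ ballF S (c.r + 1), γ ∈ N → γ = 1) (v : Γ ⧸ N) (s : Gen S) (η : Conf N) :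
    cQ N c v s (exchQ N v s η) = cQ N c v s η := by
  set x := v.out
  have hv : (x : Γ ⧸ N) = v := QuotientGroup.out_eq' v
  have hnear : ∀ z ∈ (ballF S c.r).image (x * ·) ∪ (ballF S c.r).image (x * (s : Γ) * ·),
      x⁻¹ * z ∈ ballF S (c.r + 1) ∧ (x * s)⁻¹ * z ∈ ballF S (c.r + 1) := by
    simp only [Finset.mem_union, Finset.mem_image]
    rintro z (⟨b, hb, rfl⟩ | ⟨b, hb, rfl⟩)
    · refine ⟨by simpa using ballF_mono S c.r.le_succ hb, ?_⟩
      rw [show (x * s)⁻¹ * (x * b) = (s : Γ)⁻¹ * b by group, Nat.add_comm]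
      exact mul_mem_ballF_add (mem_ballF_one (hS s s.2)) hb
    · refine ⟨?_, by simpa [mul_assoc] using ballF_mono S c.r.le_succ hb⟩
      rw [show x⁻¹ * (x * s * b) = (s : Γ) * b by group, Nat.add_comm]
      exact mul_mem_ballF_add (mem_ballF_one s.2) hb
  have hlift : ∀ z ∈ (ballF S c.r).image (x * ·) ∪ (ballF S c.r).image (x * (s : Γ) * ·),
      liftZ N (exchQ N v s η) z = exch x (x * s) (liftZ N η) z := by
    intro z hz
    rw [exchQ, ← hv, ← QuotientGroup.mk_mul]
    exact liftZ_exch_apply N (mk_eq_mk_iff_of_forall_mem_eq_one hN (hnear z hz).1)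
      (mk_eq_mk_iff_of_forall_mem_eq_one hN (hnear z hz).2) η
  rw [cQ, cQ, c.localized x s _ _ hlift, c.symm_exch]

end QuotientRate

section DirichletForm

variable {Γ : Type} [Group Γ] [DecidableEq Γ] {S : Finset Γ} (N : Subgroup Γ) [N.Normal]
  [Fintype (Γ ⧸ N)] [DecidableEq (Γ ⧸ N)]

noncomputable def edgeEnergy (c : JumpRate S) (μ : Conf N → ℝ) (v : Γ ⧸ N) (s : Gen S) : ℝ :=
  ∑ η, cQ N c v s η * (√(μ (exchQ N v s η)) - √(μ η)) ^ 2

lemma imGen_eq_sum (c : JumpRate S) (μ : Conf N → ℝ) :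
    ImGen N c μ = ∑ e : (Γ ⧸ N) × Gen S, ∑ η,
      cQ N c e.1 e.2 η * (√(μ η) * (√(μ η) - √(μ (exchQ N e.1 e.2 η)))) := by
  have hZ : (0 : ℝ) < Fintype.card (Conf N) := Nat.cast_pos.2 Fintype.card_pos
  have hsq := Real.mul_self_sqrt hZ.le
  have hpt : ∀ η, nuU N η * (sqrtDens N μ η * Lgen N c (sqrtDens N μ) η)
      = ∑ e : (Γ ⧸ N) × Gen S,
        -(cQ N c e.1 e.2 η * (√(μ η) * (√(μ η) - √(μ (exchQ N e.1 e.2 η))))) := by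
    intro η
    simp only [nuU, sqrtDens, dens, Lgen, Real.sqrt_mul hZ.le, Finset.mul_sum]
    refine Finset.sum_congr rfl fun e _ => ?_
    field_simp
    linear_combination (cQ N c e.1 e.2 η * √(μ η) * (√(μ (exchQ N e.1 e.2 η)) - √(μ η))) * hsq
  rw [ImGen, Finset.sum_congr rfl fun η _ => hpt η, Finset.sum_comm, ← Finset.sum_neg_distrib]
  simp

lemma imGen_eq_half_sum_edgeEnergy (c : JumpRate S) (μ : Conf N → ℝ)
    (hc : ∀ v s η, cQ N c v s (exchQ N v s η) = cQ N c v s η) :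
    ImGen N c μ = (1 / 2) * ∑ e : (Γ ⧸ N) × Gen S, edgeEnergy N c μ e.1 e.2 := by
  rw [imGen_eq_sum, Finset.mul_sum]
  exact Finset.sum_congr rfl fun e _ =>
    sum_mul_mul_sub_comp_of_involutive (exch_involutive _ _) (hc e.1 e.2) fun η => √(μ η)

lemma edgeEnergy_mul_left (c : JumpRate S) {μ : Conf N → ℝ} (hμ : IsInvariant N μ)
    (g v : Γ ⧸ N) (s : Gen S) : edgeEnergy N c μ (g * v) s = edgeEnergy N c μ v s := by
  rw [edgeEnergy, ← (actQ_bijective N g).sum_comp]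
  simp only [cQ_actQ, exchQ_actQ, hμ g]
  rfl

lemma edgeEnergy_le (c : JumpRate S) {μ : Conf N → ℝ} (hμ : IsInvariant N μ)
    (hc : ∀ v s η, cQ N c v s (exchQ N v s η) = cQ N c v s η) (v : Γ ⧸ N) (s : Gen S) :
    edgeEnergy N c μ v s ≤ 2 * ImGen N c μ / Fintype.card (Γ ⧸ N) := by
  have hnonneg : ∀ w s', 0 ≤ edgeEnergy N c μ w s' := fun w s' =>
    Finset.sum_nonneg fun η _ => mul_nonneg (c.c₀_pos.le.trans (c.nondeg _ _ _)) (sq_nonneg _)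
  have hconst : ∀ w, edgeEnergy N c μ w s = edgeEnergy N c μ v s := fun w => by
    simpa using edgeEnergy_mul_left N c hμ (w * v⁻¹) v s
  rw [le_div_iff₀ (Nat.cast_pos.2 Fintype.card_pos), imGen_eq_half_sum_edgeEnergy N c μ hc,
    Fintype.sum_prod_type]
  calc edgeEnergy N c μ v s * Fintype.card (Γ ⧸ N) = ∑ w : Γ ⧸ N, edgeEnergy N c μ w s := by
        simp [hconst, mul_comm]
    _ ≤ ∑ w : Γ ⧸ N, ∑ s' : Gen S, edgeEnergy N c μ w s' :=
        Finset.sum_le_sum fun w _ => Finset.single_le_sum (fun s' _ => hnonneg w s')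
          (Finset.mem_univ s)
    _ = _ := by ring

lemma c₀_mul_jumpEnergy_le_edgeEnergy (c : JumpRate S) (μ : Conf N → ℝ) (v : Γ ⧸ N)
    (s : Gen S) : c.c₀ * jumpEnergy μ (exchQ N v s) ≤ edgeEnergy N c μ v s := by
  rw [jumpEnergy, Finset.mul_sum]
  exact Finset.sum_le_sum fun η _ => mul_le_mul_of_nonneg_right (c.nondeg _ _ _) (sq_nonneg _)

end DirichletForm

section MovingParticle

variable {Γ : Type} [Group Γ] [DecidableEq Γ] {S : Finset Γ} (N : Subgroup Γ) [N.Normal]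
  [Fintype (Γ ⧸ N)] [DecidableEq (Γ ⧸ N)]

lemma sqrt_jumpEnergy_exch_le {μ : Conf N → ℝ} {β : ℝ} (hβ : 0 ≤ β)
    (hedge : ∀ v : Γ ⧸ N, ∀ s ∈ S, √(jumpEnergy μ (exch v (v * (s : Γ ⧸ N)))) ≤ β)
    {n : ℕ} {x : Γ} (hx : x ∈ ballF S n) (v : Γ ⧸ N) :
    √(jumpEnergy μ (exch v (v * (x : Γ ⧸ N)))) ≤ 2 * n * β := by
  induction n generalizing x v with
  | zero => simp [mem_ballF_zero.1 hx, exch_self, jumpEnergy_id]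
  | succ n ih =>
    push_cast
    obtain hx | ⟨y, hy, s, hs, rfl⟩ := mem_ballF_succ.1 hx
    · linarith [ih hx v]
    rw [QuotientGroup.mk_mul, ← mul_assoc]
    set w := v * (y : Γ ⧸ N)
    by_cases hvt : v = w * s
    · rw [← hvt, exch_self, jumpEnergy_id, Real.sqrt_zero]
      positivity
    by_cases hvw : v = w
    · rw [← hvw]
      nlinarith [hedge v s hs]
    -- the exchange `v ↔ w s` is the exchange `v ↔ w` conjugated by the edge `w ↔ w s`
    rw [exch_eq_exch_comp_exch_comp_exch hvw hvt]
    have hA := (exch_involutive w (w * s)).bijective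
    have h₁ := sqrt_jumpEnergy_comp_le μ (exch w (w * s)) ((exch_involutive v w).bijective.comp hA)
    have h₂ := sqrt_jumpEnergy_comp_le μ (exch v w) hA
    linarith [hedge w s hs, ih hy v]

end MovingParticle

section Decorrelation

variable {G : Type} [Group G]

def occDiff (w a : G) (η : G → Bool) : ℝ :=
  (if η a then 1 else 0) - (if η (a * w) then 1 else 0)

lemma abs_occDiff_le_one (w a : G) (η : G → Bool) : |occDiff w a η| ≤ 1 := by
  unfold occDiff
  split_ifs <;> norm_num

lemma abs_sum_occDiff_le (A : Finset G) (w : G) (η : G → Bool) :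
    |∑ a ∈ A, occDiff w a η| ≤ A.card := calc
  |∑ a ∈ A, occDiff w a η| ≤ ∑ a ∈ A, |occDiff w a η| := Finset.abs_sum_le_sum_abs _ _
  _ ≤ ∑ _a ∈ A, (1 : ℝ) := Finset.sum_le_sum fun a _ => abs_occDiff_le_one w a η
  _ = A.card := by simp

variable [DecidableEq G]

lemma occDiff_exch_self (w a : G) (η : G → Bool) :
    occDiff w a (exch a (a * w) η) = -occDiff w a η := by
  by_cases h : a * w = a
  · simp [occDiff, h]
  · simp [occDiff, exch, h]

lemma occDiff_exch_of_notMem {w a b : G} (ha : a ∉ ({b, b * w, b * w⁻¹} : Finset G))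
    (η : G → Bool) : occDiff w a (exch b (b * w) η) = occDiff w a η := by
  simp only [Finset.mem_insert, Finset.mem_singleton, not_or] at ha
  obtain ⟨h₁, h₂, h₃⟩ := ha
  have h₄ : a * w ≠ b := fun h => h₃ (by rw [← h, mul_inv_cancel_right])
  simp [occDiff, exch, h₁, h₂, h₄]

variable [Fintype G] {μ : (G → Bool) → ℝ}

/-- Only the at most three `a` with `a` or `a w` in `{b, b w}` feel the exchange `b ↔ b w`; the
rest of the sum is invariant under it while `occDiff w b` changes sign, so their correlation is
controlled by the energy of that exchange. -/
lemma sum_mul_occDiff_mul_sum_le (hμ0 : ∀ η, 0 ≤ μ η) (hμ1 : ∑ η, μ η = 1) (A : Finset G)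
    (w b : G) :
    ∑ η, μ η * (occDiff w b η * ∑ a ∈ A, occDiff w a η)
      ≤ 3 + A.card * √(jumpEnergy μ (exch b (b * w))) := by
  set B : Finset G := {b, b * w, b * w⁻¹}
  have hnear : ∑ η, μ η * (occDiff w b η * ∑ a ∈ A ∩ B, occDiff w a η) ≤ 3 := by
    refine sum_mul_le_of_le hμ0 hμ1 fun η => (le_abs_self _).trans ?_
    rw [abs_mul]
    calc |occDiff w b η| * |∑ a ∈ A ∩ B, occDiff w a η| ≤ 1 * (A ∩ B).card :=
          mul_le_mul (abs_occDiff_le_one w b η) (abs_sum_occDiff_le _ w η) (abs_nonneg _)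
            zero_le_one
      _ ≤ 3 := by
          rw [one_mul]
          exact_mod_cast (Finset.card_le_card Finset.inter_subset_right).trans
            Finset.card_le_three
  have hfar : ∑ η, μ η * (occDiff w b η * ∑ a ∈ A \ B, occDiff w a η)
      ≤ A.card * √(jumpEnergy μ (exch b (b * w))) := by
    refine (le_abs_self _).trans (abs_sum_mul_le_of_comp_eq_neg hμ0 hμ1 (exch_involutive _ _)
      (fun η => ?_) fun η => ?_)
    · rw [occDiff_exch_self, Finset.sum_congr rfl fun a ha =>
        occDiff_exch_of_notMem (Finset.mem_sdiff.1 ha).2 η, neg_mul]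
    · rw [abs_mul]
      calc |occDiff w b η| * |∑ a ∈ A \ B, occDiff w a η| ≤ 1 * (A \ B).card :=
            mul_le_mul (abs_occDiff_le_one w b η) (abs_sum_occDiff_le _ w η) (abs_nonneg _)
              zero_le_one
        _ ≤ A.card := by
            rw [one_mul]
            exact_mod_cast Finset.card_le_card Finset.sdiff_subset
  have hsplit : ∀ η, ∑ a ∈ A, occDiff w a η
      = ∑ a ∈ A ∩ B, occDiff w a η + ∑ a ∈ A \ B, occDiff w a η := fun η =>
    (Finset.sum_inter_add_sum_sdiff A B _).symm
  simp only [hsplit, mul_add, Finset.sum_add_distrib]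
  linarith

lemma sum_mul_sum_occDiff_sq_le (hμ0 : ∀ η, 0 ≤ μ η) (hμ1 : ∑ η, μ η = 1) (A : Finset G)
    (w : G) {κ : ℝ} (hκ : ∀ b, √(jumpEnergy μ (exch b (b * w))) ≤ κ) :
    ∑ η, μ η * (∑ a ∈ A, occDiff w a η) ^ 2 ≤ A.card * (3 + A.card * κ) := calc
  ∑ η, μ η * (∑ a ∈ A, occDiff w a η) ^ 2
      = ∑ b ∈ A, ∑ η, μ η * (occDiff w b η * ∑ a ∈ A, occDiff w a η) := by
        rw [Finset.sum_comm]
        simp only [sq, Finset.sum_mul, Finset.mul_sum]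
        exact Finset.sum_congr rfl fun _ _ => Finset.sum_comm
  _ ≤ ∑ _b ∈ A, (3 + A.card * κ) := Finset.sum_le_sum fun b _ =>
        (sum_mul_occDiff_mul_sum_le hμ0 hμ1 A w b).trans (by gcongr; exact hκ b)
  _ = A.card * (3 + A.card * κ) := by rw [Finset.sum_const, nsmul_eq_mul]

end Decorrelation

section TwoBlocks

variable {Γ : Type} [Group Γ] (N : Subgroup Γ) [N.Normal] [DecidableEq (Γ ⧸ N)]

lemma etabarQ_one_sub_etabarQ {Fi : Finset Γ} (hinj : Set.InjOn ((↑) : Γ → Γ ⧸ N) Fi)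
    (w : Γ ⧸ N) (η : Conf N) :
    etabarQ N Fi 1 η - etabarQ N Fi w η
      = (Fi.card : ℝ)⁻¹ * ∑ a ∈ Fi.image ((↑) : Γ → Γ ⧸ N), occDiff w a η := by
  rw [Finset.sum_image hinj]
  simp [etabarQ, occDiff, mul_sub, Finset.sum_sub_distrib]

variable [Fintype (Γ ⧸ N)]

lemma emeas_abs_etabarQ_sub_le {μ : Conf N → ℝ} (hμ : IsProb N μ) {Fi : Finset Γ}
    (hFi : Fi.Nonempty) (hinj : Set.InjOn ((↑) : Γ → Γ ⧸ N) Fi) (w : Γ ⧸ N) {κ : ℝ}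
    (hκ : ∀ b : Γ ⧸ N, √(jumpEnergy μ (exch b (b * w))) ≤ κ) :
    Emeas N μ (fun η => |etabarQ N Fi 1 η - etabarQ N Fi w η|) ≤ √(3 / Fi.card + κ) := by
  have hn : (0 : ℝ) < Fi.card := Nat.cast_pos.2 hFi.card_pos
  have hsq := sum_mul_sum_occDiff_sq_le hμ.1 hμ.2 (Fi.image ((↑) : Γ → Γ ⧸ N)) w hκ
  rw [Finset.card_image_of_injOn hinj] at hsq
  refine (sum_mul_abs_le_sqrt hμ.1 hμ.2 _).trans (Real.sqrt_le_sqrt ?_)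
  calc ∑ η, μ η * (etabarQ N Fi 1 η - etabarQ N Fi w η) ^ 2
      = (Fi.card : ℝ)⁻¹ ^ 2 * ∑ η, μ η * (∑ a ∈ Fi.image ((↑) : Γ → Γ ⧸ N), occDiff w a η) ^ 2 := by
        simp only [etabarQ_one_sub_etabarQ N hinj]
        rw [Finset.mul_sum]
        exact Finset.sum_congr rfl fun η _ => by ring
    _ ≤ (Fi.card : ℝ)⁻¹ ^ 2 * (Fi.card * (3 + Fi.card * κ)) := by gcongr
    _ = 3 / Fi.card + κ := by field_simp

variable [DecidableEq Γ] {S : Finset Γ}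

lemma sqrt_jumpEnergy_exch_le_of_imGen_le (hS : ∀ s ∈ S, s⁻¹ ∈ S)
    (hgen : Subgroup.closure (S : Set Γ) = ⊤) (c : JumpRate S)
    (hN : ∀ γ ∈ ballF S (c.r + 1), γ ∈ N → γ = 1) {μ : Conf N → ℝ} (hμ : IsInvariant N μ)
    {C t : ℝ} (ht : 0 < t) (hI : ImGen N c μ ≤ C * N.index / t) {σ : Γ} {ε : ℝ}
    (hσ : (wordNorm S σ : ℝ) ≤ ε * √t) (v : Γ ⧸ N) :
    √(jumpEnergy μ (exch v (v * σ))) ≤ 2 * √(2 * C / c.c₀) * ε := by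
  have hc₀ := c.c₀_pos
  have hV : (0 : ℝ) < Fintype.card (Γ ⧸ N) := Nat.cast_pos.2 Fintype.card_pos
  rw [Subgroup.index_eq_card, Nat.card_eq_fintype_card] at hI
  set β := √(2 * C / (c.c₀ * t))
  have hedge : ∀ v : Γ ⧸ N, ∀ s ∈ S, √(jumpEnergy μ (exch v (v * (s : Γ ⧸ N)))) ≤ β := by
    intro v s hs
    refine Real.sqrt_le_sqrt ((le_div_iff₀ (by positivity)).2 ?_)
    have h : c.c₀ * jumpEnergy μ (exch v (v * (s : Γ ⧸ N))) ≤ 2 * C / t :=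
      (c₀_mul_jumpEnergy_le_edgeEnergy N c μ v ⟨s, hs⟩).trans
        ((edgeEnergy_le N c hμ (cQ_exchQ N c hS hN) v ⟨s, hs⟩).trans
          ((div_le_div_of_nonneg_right (mul_le_mul_of_nonneg_left hI zero_le_two) hV.le).trans_eq
            (by field_simp)))
    rw [le_div_iff₀ ht] at h
    linarith
  have hβt : √t * β = √(2 * C / c.c₀) := by
    rw [← Real.sqrt_mul ht.le]
    congr 1
    field_simp
  calc √(jumpEnergy μ (exch v (v * σ)))
      ≤ 2 * wordNorm S σ * β :=
        sqrt_jumpEnergy_exch_le N (Real.sqrt_nonneg _) hedge (mem_ballF_wordNorm hS hgen σ) v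
    _ ≤ 2 * (ε * √t) * β := by gcongr
    _ = 2 * √(2 * C / c.c₀) * ε := by rw [← hβt]; ring

end TwoBlocks

theorem two_blocks_estimate_general
    {Γ : Type} [Group Γ] [DecidableEq Γ] [Infinite Γ]
    (S : Finset Γ) (hS_symm : ∀ s ∈ S, s⁻¹ ∈ S)
    (hS_gen : Subgroup.closure (S : Set Γ) = ⊤)
    (Γs : ℕ → Subgroup Γ) [∀ m, (Γs m).Normal]
    [∀ m, Fintype (Γ ⧸ Γs m)] [∀ m, DecidableEq (Γ ⧸ Γs m)]
    (hdesc : ∀ m, Γs (m + 1) ≤ Γs m)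
    (hsep : ∀ x : Γ, (∀ m, x ∈ Γs m) → x = 1)
    (t : ℕ → ℝ) (ht_pos : ∀ m, 0 < t m)
    (F : ℕ → Finset Γ) (hF : IsFolner S F)
    (c : JumpRate S) (C : ℝ) :
    Tendsto (fun i : ℕ =>
        limsup (fun ε : ℝ =>
            limsup (fun L : ℕ =>
                limsup (fun m : ℕ =>
                    sSup {x : ℝ | ∃ σ : Γ, ∃ μ : Conf (Γs m) → ℝ,
                      (L < wordNorm S σ ∧ (wordNorm S σ : ℝ) ≤ ε * Real.sqrt (t m)) ∧
                        (IsProb (Γs m) μ ∧ IsInvariant (Γs m) μ ∧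
                          ImGen (Γs m) c μ ≤ C * ((Γs m).index : ℝ) / t m) ∧
                        x = Emeas (Γs m) μ (fun η =>
                          |etabarQ (Γs m) (F i) 1 η -
                            etabarQ (Γs m) (F i) (QuotientGroup.mk σ) η|)})
                  atTop)
              atTop)
          (nhdsWithin 0 (Set.Ioi 0)))
      atTop (nhds 0) := by
  set K := 2 * √(2 * C / c.c₀)
  refine tendsto_limsup_limsup_limsup_of_le (b := fun i ε => √(3 / (F i).card + K * ε))
    (a := fun i => √(3 / (F i).card)) ?_ ?_ ?_ ?_
  · intro i ε L m
    refine Real.sSup_nonneg ?_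
    rintro _ ⟨σ, μ, -, ⟨hμ, -⟩, rfl⟩
    exact Finset.sum_nonneg fun η _ => mul_nonneg (hμ.1 η) (abs_nonneg _)
  · intro i ε L
    filter_upwards [eventually_forall_mem_subgroup_eq_one Γs hdesc hsep (ballF S (c.r + 1)),
      eventually_forall_mem_subgroup_eq_one Γs hdesc hsep ((F i)⁻¹ * F i)] with m hball hFi
    refine Real.sSup_le ?_ (Real.sqrt_nonneg _)
    rintro _ ⟨σ, μ, ⟨-, hσ⟩, ⟨hμ, hinv, hI⟩, rfl⟩
    exact emeas_abs_etabarQ_sub_le (Γs m) hμ (hF.1 i) (injOn_mk_of_forall_mem_eq_one hFi) σ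
      (sqrt_jumpEnergy_exch_le_of_imGen_le (Γs m) hS_symm hS_gen c hball hinv (ht_pos m) hI hσ)
  · intro i
    have hcont : Continuous fun ε : ℝ => √(3 / (F i).card + K * ε) := by fun_prop
    simpa using (hcont.tendsto 0).mono_left nhdsWithin_le_nhds
  · simpa using (tendsto_const_nhds.div_atTop (IsFolner.tendsto_card hS_symm hS_gen hF)).sqrt

/-- **Theorem 3.3 (the two-blocks estimate).**
For every jump rate `c` and every `C > 0`,
`lim_{i→∞} limsup_{ε→0} limsup_{L→∞} limsup_{m→∞}
  sup_{σ ∈ Γ, L < |σ|_Γ ≤ ε√t_m} sup_{μ ∈ P_{m,C}} E_μ |η̄_{o,i} - η̄_{σ̄o,i}| = 0`. -/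
theorem two_blocks_estimate
    {Γ : Type} [Group Γ] [DecidableEq Γ] [Infinite Γ]
    (S : Finset Γ) (hS_symm : ∀ s ∈ S, s⁻¹ ∈ S)
    (hS_gen : Subgroup.closure (S : Set Γ) = ⊤)
    (Γs : ℕ → Subgroup Γ) [∀ m, (Γs m).Normal] [∀ m, (Γs m).FiniteIndex]
    [∀ m, Fintype (Γ ⧸ Γs m)] [∀ m, DecidableEq (Γ ⧸ Γs m)]
    (hdesc : ∀ m, Γs (m + 1) ≤ Γs m)
    (hsep : ∀ x : Γ, (∀ m, x ∈ Γs m) → x = 1)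
    (t : ℕ → ℝ) (ht_pos : ∀ m, 0 < t m) (ht_mono : StrictMono t)
    (ht_top : Tendsto t atTop atTop)
    (ht_diam : ∀ m, Real.sqrt (t m) ≤ 2 * (diamQ (Γs m) S : ℝ))
    (F : ℕ → Finset Γ) (hF : IsFolner S F)
    (c : JumpRate S) (C : ℝ) (hC : 0 < C) :
    Tendsto (fun i : ℕ =>
        limsup (fun ε : ℝ =>
            limsup (fun L : ℕ =>
                limsup (fun m : ℕ =>
                    sSup {x : ℝ | ∃ σ : Γ, ∃ μ : Conf (Γs m) → ℝ,
                      (L < wordNorm S σ ∧ (wordNorm S σ : ℝ) ≤ ε * Real.sqrt (t m)) ∧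
                        (IsProb (Γs m) μ ∧ IsInvariant (Γs m) μ ∧
                          ImGen (Γs m) c μ ≤ C * ((Γs m).index : ℝ) / t m) ∧
                        x = Emeas (Γs m) μ (fun η =>
                          |etabarQ (Γs m) (F i) 1 η -
                            etabarQ (Γs m) (F i) (QuotientGroup.mk σ) η|)})
                  atTop)
              atTop)
          (nhdsWithin 0 (Set.Ioi 0)))
      atTop (nhds 0) :=
  two_blocks_estimate_general S hS_symm hS_gen Γs hdesc hsep t ht_pos F hF c C

end Tower
end

section
/- (Uniform weak law of large numbers over Følner averages) Let f: V×Z → ℝ be a Γ-invariant local function bundle and (F_i) a sequence of nonempty finite subsets of Γ with |F_i| → ∞. Then lim_{i→∞} sup_{ρ ∈ [0,1]} E_{ν_ρ} | f̄_{o,i} − ⟨f_o⟩(ρ) | = 0, where f̄_{o,i} := (1/|F_i|) Σ_{σ∈F_i} f_{σo} and ⟨f_o⟩(ρ) := E_{ν_ρ}[f_o]. -/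
open Filter Pointwise

namespace Tower

variable {Γ : Type} [Group Γ] [DecidableEq Γ]

/-!
Let `B = B(o, r)` be the ball on which `f_o` depends. Under `ν_ρ` the variables `f_σ` and `f_τ`
are independent as soon as `σB` and `τB` are disjoint, i.e. unless `τ ∈ σBB⁻¹`, and all of them
are bounded by some `M`. Hence the variance of `f̄_{o,i}` is at most `|BB⁻¹| (2M)² / |F_i|`,
uniformly in `ρ`, and by Cauchy–Schwarz `E_{ν_ρ} |f̄_{o,i} - ⟨f_o⟩(ρ)|` is at most the square root
of this bound, which tends to `0`.
-/

section Bernoulli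

variable {ρ : ℝ} {ι κ : Type} [Fintype ι] [Fintype κ]

lemma bw_nonneg (hρ : ρ ∈ Set.Icc (0 : ℝ) 1) (b : Bool) : 0 ≤ bw ρ b := by
  cases b
  · simpa [bw] using hρ.2
  · simpa [bw] using hρ.1

lemma prod_bw_nonneg (hρ : ρ ∈ Set.Icc (0 : ℝ) 1) (ζ : ι → Bool) : 0 ≤ ∏ i, bw ρ (ζ i) :=
  Finset.prod_nonneg fun i _ => bw_nonneg hρ (ζ i)

variable [DecidableEq ι] [DecidableEq κ]

lemma sum_prod_bw (ρ : ℝ) : ∑ ζ : ι → Bool, ∏ i, bw ρ (ζ i) = 1 := by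
  rw [← Fintype.piFinset_univ, Finset.sum_prod_piFinset]
  simp [bw]

noncomputable def bernoulliExp (ρ : ℝ) (g : (ι → Bool) → ℝ) : ℝ :=
  ∑ ζ : ι → Bool, (∏ i, bw ρ (ζ i)) * g ζ

lemma bernoulliExp_const (ρ c : ℝ) : bernoulliExp ρ (fun _ : ι → Bool => c) = c := by
  rw [bernoulliExp, ← Finset.sum_mul, sum_prod_bw, one_mul]

lemma bernoulliExp_equiv (ρ : ℝ) (e : ι ≃ κ) (g : (κ → Bool) → ℝ) :
    bernoulliExp ρ g = bernoulliExp ρ (fun ξ : ι → Bool => g (ξ ∘ e.symm)) := by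
  refine (Fintype.sum_equiv (e.arrowCongr (Equiv.refl Bool)) _ _ fun ξ => ?_).symm
  have hw : ∏ i, bw ρ (ξ i) = ∏ k, bw ρ (ξ (e.symm k)) :=
    Fintype.prod_equiv e _ _ fun i => by simp
  simp [Equiv.arrowCongr, hw, Function.comp_def]

lemma bernoulliExp_sum_elim (ρ : ℝ) (g : (ι → Bool) → ℝ) (h : (κ → Bool) → ℝ) :
    bernoulliExp ρ (fun ζ : ι ⊕ κ → Bool => g (ζ ∘ Sum.inl) * h (ζ ∘ Sum.inr)) =
      bernoulliExp ρ g * bernoulliExp ρ h := by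
  rw [bernoulliExp, bernoulliExp, bernoulliExp, Finset.sum_mul_sum, ← Fintype.sum_prod_type']
  refine Fintype.sum_equiv (Equiv.sumArrowEquivProdArrow ι κ Bool) _ _ fun ζ => ?_
  change _ = (∏ i, bw ρ (ζ (Sum.inl i))) * g (ζ ∘ Sum.inl) *
    ((∏ k, bw ρ (ζ (Sum.inr k))) * h (ζ ∘ Sum.inr))
  rw [Fintype.prod_sum_type]
  ring

end Bernoulli

def zeroExtend {α : Type} [DecidableEq α] (A : Finset α) (ζ : {a // a ∈ A} → Bool) :
    α → Bool :=
  fun z => if h : z ∈ A then ζ ⟨z, h⟩ else false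

lemma zeroExtend_of_mem {α : Type} [DecidableEq α] {A : Finset α} (ζ : {a // a ∈ A} → Bool)
    {z : α} (hz : z ∈ A) :
    zeroExtend A ζ z = ζ ⟨z, hz⟩ :=
  dif_pos hz

section ExpCyl

variable {α : Type} [DecidableEq α] {ρ : ℝ} {A B C : Finset α} {g h : (α → Bool) → ℝ}

lemma expCyl_eq_bernoulliExp (ρ : ℝ) (A : Finset α) (g : (α → Bool) → ℝ) :
    expCyl ρ A g = bernoulliExp ρ (fun ζ => g (zeroExtend A ζ)) :=
  rfl

lemma expCyl_const (ρ : ℝ) (A : Finset α) (c : ℝ) : expCyl ρ A (fun _ => c) = c :=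
  bernoulliExp_const ρ c

lemma expCyl_union_mul (ρ : ℝ) (hBC : Disjoint B C) (hg : DependsOn g (B : Set α))
    (hh : DependsOn h (C : Set α)) :
    expCyl ρ (B ∪ C) (fun η => g η * h η) = expCyl ρ B g * expCyl ρ C h := by
  rw [expCyl_eq_bernoulliExp, expCyl_eq_bernoulliExp, expCyl_eq_bernoulliExp,
    bernoulliExp_equiv ρ (Equiv.Finset.union B C hBC), ← bernoulliExp_sum_elim]
  congr 1
  funext ξ
  congr 1
  · refine hg fun z hz => ?_
    have hz : z ∈ B := hz
    simp [zeroExtend_of_mem _ hz, zeroExtend_of_mem _ (Finset.mem_union_left C hz),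
      Equiv.Finset.union_symm_left hBC hz]
  · refine hh fun z hz => ?_
    have hz : z ∈ C := hz
    simp [zeroExtend_of_mem _ hz, zeroExtend_of_mem _ (Finset.mem_union_right B hz),
      Equiv.Finset.union_symm_right hBC hz]

lemma expCyl_of_subset (ρ : ℝ) (hBA : B ⊆ A) (hg : DependsOn g (B : Set α)) :
    expCyl ρ A g = expCyl ρ B g := by
  have h := expCyl_union_mul ρ Finset.disjoint_sdiff hg (dependsOn_const (1 : ℝ) |>.mono
    (Set.empty_subset ((A \ B : Finset α) : Set α)))
  simpa only [mul_one, Finset.union_sdiff_of_subset hBA, expCyl_const] using h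

lemma expCyl_mul_of_disjoint (ρ : ℝ) (hBA : B ⊆ A) (hCA : C ⊆ A) (hBC : Disjoint B C)
    (hg : DependsOn g (B : Set α)) (hh : DependsOn h (C : Set α)) :
    expCyl ρ A (fun η => g η * h η) = expCyl ρ B g * expCyl ρ C h := by
  have hgh : DependsOn (fun η => g η * h η) ((B ∪ C : Finset α) : Set α) := by
    rw [Finset.coe_union]
    exact fun η η' hη => congr_arg₂ (· * ·)
      (hg fun z hz => hη z (Or.inl hz)) (hh fun z hz => hη z (Or.inr hz))
  rw [expCyl_of_subset ρ (Finset.union_subset hBA hCA) hgh, expCyl_union_mul ρ hBC hg hh]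

lemma expCyl_sum {β : Type} (ρ : ℝ) (A : Finset α) (s : Finset β) (G : β → (α → Bool) → ℝ) :
    expCyl ρ A (fun η => ∑ x ∈ s, G x η) = ∑ x ∈ s, expCyl ρ A (G x) := by
  simp only [expCyl, Finset.mul_sum]
  exact Finset.sum_comm

lemma expCyl_const_mul (ρ : ℝ) (A : Finset α) (c : ℝ) (g : (α → Bool) → ℝ) :
    expCyl ρ A (fun η => c * g η) = c * expCyl ρ A g := by
  simp only [expCyl, Finset.mul_sum]
  exact Finset.sum_congr rfl fun _ _ => mul_left_comm _ _ _

lemma expCyl_sub_const (ρ : ℝ) (A : Finset α) (g : (α → Bool) → ℝ) (c : ℝ) :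
    expCyl ρ A (fun η => g η - c) = expCyl ρ A g - c := by
  conv_rhs => rw [← expCyl_const ρ A c]
  simp only [expCyl, ← Finset.sum_sub_distrib, mul_sub]

lemma expCyl_mono (hρ : ρ ∈ Set.Icc (0 : ℝ) 1) (A : Finset α) (hgh : ∀ η, g η ≤ h η) :
    expCyl ρ A g ≤ expCyl ρ A h :=
  Finset.sum_le_sum fun ζ _ => mul_le_mul_of_nonneg_left (hgh _) (prod_bw_nonneg hρ ζ)

lemma expCyl_nonneg (hρ : ρ ∈ Set.Icc (0 : ℝ) 1) (A : Finset α) (hg : ∀ η, 0 ≤ g η) :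
    0 ≤ expCyl ρ A g :=
  expCyl_const ρ A 0 ▸ expCyl_mono hρ A hg

lemma abs_expCyl_le (hρ : ρ ∈ Set.Icc (0 : ℝ) 1) (A : Finset α) {M : ℝ}
    (hM : ∀ η, |g η| ≤ M) : |expCyl ρ A g| ≤ M := by
  rw [abs_le]
  constructor
  · simpa only [expCyl_const] using
      expCyl_mono hρ A (g := fun _ => -M) fun η => neg_le_of_abs_le (hM η)
  · simpa only [expCyl_const] using
      expCyl_mono hρ A (h := fun _ => M) fun η => le_of_abs_le (hM η)

lemma expCyl_abs_le_sqrt (hρ : ρ ∈ Set.Icc (0 : ℝ) 1) (A : Finset α) (g : (α → Bool) → ℝ) :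
    expCyl ρ A (fun η => |g η|) ≤ Real.sqrt (expCyl ρ A (fun η => g η ^ 2)) := by
  refine Real.le_sqrt_of_sq_le ?_
  -- Cauchy–Schwarz against the Bernoulli weights, which sum to one
  have hCS := Finset.sum_sq_le_sum_mul_sum_of_sq_le_mul Finset.univ
    (r := fun ζ => (∏ a, bw ρ (ζ a)) * |g (zeroExtend A ζ)|)
    (f := fun ζ => ∏ a, bw ρ (ζ a))
    (g := fun ζ => (∏ a, bw ρ (ζ a)) * g (zeroExtend A ζ) ^ 2)
    (fun ζ _ => prod_bw_nonneg hρ ζ)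
    (fun ζ _ => mul_nonneg (prod_bw_nonneg hρ ζ) (sq_nonneg _))
    (fun ζ _ => le_of_eq (by rw [mul_pow, sq_abs]; ring))
  rwa [sum_prod_bw, one_mul] at hCS

end ExpCyl

lemma expCyl_smul (ρ : ℝ) (σ : Γ) {B : Finset Γ} {g : (Γ → Bool) → ℝ}
    (hg : DependsOn g (B : Set Γ)) :
    expCyl ρ (σ • B) (fun η => g (fun z => η (σ * z))) = expCyl ρ B g := by
  let e : {a // a ∈ B} ≃ {a // a ∈ σ • B} :=
    (Equiv.mulLeft σ).subtypeEquiv fun a => (Finset.smul_mem_smul_finset_iff σ).symm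
  rw [expCyl_eq_bernoulliExp, expCyl_eq_bernoulliExp, bernoulliExp_equiv ρ e]
  congr 1
  funext ξ
  refine hg fun z hz => ?_
  have hz : z ∈ B := hz
  have hσz : σ * z ∈ σ • B := Finset.smul_mem_smul_finset hz
  rw [zeroExtend_of_mem _ hz, zeroExtend_of_mem _ hσz]
  exact congr_arg ξ (e.symm_apply_eq.mpr rfl)

lemma disjoint_smul_of_notMem_smul_mul_inv {G : Type} [Group G] [DecidableEq G] {B : Finset G}
    {σ τ : G} (hτ : τ ∉ σ • (B * B⁻¹)) : Disjoint (σ • B) (τ • B) := by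
  by_contra h
  refine hτ ?_
  obtain ⟨x, hxσ, hxτ⟩ := Finset.not_disjoint_iff.mp h
  obtain ⟨b, hb, rfl⟩ := Finset.mem_smul_finset.mp hxσ
  obtain ⟨b', hb', hbb'⟩ := Finset.mem_smul_finset.mp hxτ
  refine Finset.mem_smul_finset.mpr ⟨b * b'⁻¹, Finset.mul_mem_mul hb (Finset.inv_mem_inv hb'), ?_⟩
  rw [smul_eq_mul, ← mul_assoc, ← smul_eq_mul σ b, ← hbb', smul_eq_mul, mul_inv_cancel_right]

namespace LocalBundleV

variable {S : Finset Γ} (f : LocalBundleV S)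

lemma apply_eq_apply_one (σ : Γ) (η : Γ → Bool) : f.f σ η = f.f 1 (fun z => η (σ * z)) := by
  simpa using f.invariant σ 1 (fun z => η (σ * z))

lemma dependsOn (σ : Γ) : DependsOn (f.f σ) ((σ • ballF S f.r : Finset Γ) : Set Γ) :=
  fun η η' h => f.localized σ η η' fun z hz => h z (by simpa [Finset.smul_finset_def] using hz)

lemma dependsOn_one : DependsOn (f.f 1) (ballF S f.r : Set Γ) := by
  simpa using f.dependsOn 1

lemma exists_abs_le : ∃ M, ∀ σ η, |f.f σ η| ≤ M := by
  obtain ⟨M, hM⟩ := (Set.finite_range fun ζ : {a // a ∈ ballF S f.r} → Bool =>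
    |f.f 1 (zeroExtend _ ζ)|).bddAbove
  refine ⟨M, fun σ η => ?_⟩
  rw [f.apply_eq_apply_one, f.dependsOn_one (y := zeroExtend _ fun a => η (σ * a))]
  · exact hM ⟨_, rfl⟩
  · intro z hz
    rw [zeroExtend_of_mem _ hz]

lemma expCyl_smul_ball (ρ : ℝ) (σ : Γ) : expCyl ρ (σ • ballF S f.r) (f.f σ) = globalAvg f ρ := by
  rw [show f.f σ = fun η => f.f 1 (fun z => η (σ * z)) from funext (f.apply_eq_apply_one σ),
    expCyl_smul ρ σ f.dependsOn_one, globalAvg]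

/-- The local average `f̄_{o,i}` of the paper, for `Fi = F_i`. -/
noncomputable def localAvg (Fi : Finset Γ) (η : Γ → Bool) : ℝ :=
  (Fi.card : ℝ)⁻¹ * ∑ σ ∈ Fi, f.f σ η

variable {ρ : ℝ} {A : Finset Γ}

lemma expCyl_centered_mul_eq_zero {σ τ : Γ} (hσ : σ • ballF S f.r ⊆ A) (hτ : τ • ballF S f.r ⊆ A)
    (hστ : Disjoint (σ • ballF S f.r) (τ • ballF S f.r)) :
    expCyl ρ A (fun η => (f.f σ η - globalAvg f ρ) * (f.f τ η - globalAvg f ρ)) = 0 := by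
  rw [expCyl_mul_of_disjoint ρ hσ hτ hστ (fun η η' h => by rw [f.dependsOn σ h])
    (fun η η' h => by rw [f.dependsOn τ h]), expCyl_sub_const, f.expCyl_smul_ball, sub_self,
    zero_mul]

lemma abs_expCyl_centered_mul_le (hρ : ρ ∈ Set.Icc (0 : ℝ) 1) {M : ℝ}
    (hM : ∀ σ η, |f.f σ η| ≤ M) (σ τ : Γ) :
    |expCyl ρ A (fun η => (f.f σ η - globalAvg f ρ) * (f.f τ η - globalAvg f ρ))| ≤
      (2 * M) ^ 2 := by
  have hm : |globalAvg f ρ| ≤ M := abs_expCyl_le hρ _ (hM 1)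
  have hc : ∀ x η, |f.f x η - globalAvg f ρ| ≤ 2 * M := fun x η =>
    (abs_sub _ _).trans (by linarith [hM x η])
  refine abs_expCyl_le hρ A fun η => ?_
  rw [abs_mul, sq]
  exact mul_le_mul (hc σ η) (hc τ η) (abs_nonneg _) ((abs_nonneg _).trans (hc σ η))

lemma expCyl_sq_localAvg_sub_le (hρ : ρ ∈ Set.Icc (0 : ℝ) 1) {M : ℝ}
    (hM : ∀ σ η, |f.f σ η| ≤ M) {Fi : Finset Γ} (hFi : Fi.Nonempty) :
    expCyl ρ (Fi * ballF S f.r) (fun η => (f.localAvg Fi η - globalAvg f ρ) ^ 2) ≤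
      ((ballF S f.r * (ballF S f.r)⁻¹).card : ℝ) * (2 * M) ^ 2 / Fi.card := by
  set B := ballF S f.r
  set m := globalAvg f ρ
  set K : ℝ := ((B * B⁻¹).card : ℝ) * (2 * M) ^ 2
  have hn : (Fi.card : ℝ) ≠ 0 := Nat.cast_ne_zero.mpr hFi.card_pos.ne'
  let cov σ τ := expCyl ρ (Fi * B) (fun η => (f.f σ η - m) * (f.f τ η - m))
  have hsq : ∀ η, (f.localAvg Fi η - m) ^ 2 =
      ((Fi.card : ℝ)⁻¹) ^ 2 * ∑ σ ∈ Fi, ∑ τ ∈ Fi, (f.f σ η - m) * (f.f τ η - m) := by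
    intro η
    rw [← Finset.sum_mul_sum, ← sq, ← mul_pow, Finset.sum_sub_distrib, Finset.sum_const,
      nsmul_eq_mul, localAvg]
    field_simp
  -- `f_σ` and `f_τ` are independent unless `τ ∈ σ B B⁻¹`
  have hrow : ∀ σ ∈ Fi, ∑ τ ∈ Fi, cov σ τ ≤ K := by
    intro σ hσ
    have hσB : σ • B ⊆ Fi * B := Finset.smul_finset_subset_mul hσ
    rw [← Finset.sum_filter_of_ne (p := (· ∈ σ • (B * B⁻¹))) fun τ hτ hcov =>
      by_contra fun hστ => hcov (f.expCyl_centered_mul_eq_zero hσB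
        (Finset.smul_finset_subset_mul hτ)
        (disjoint_smul_of_notMem_smul_mul_inv hστ))]
    calc ∑ τ ∈ Fi with τ ∈ σ • (B * B⁻¹), cov σ τ
        ≤ (Fi.filter (· ∈ σ • (B * B⁻¹))).card • (2 * M) ^ 2 :=
          Finset.sum_le_card_nsmul _ _ _ fun τ _ =>
            le_of_abs_le (f.abs_expCyl_centered_mul_le hρ hM σ τ)
      _ ≤ K := by
        rw [nsmul_eq_mul]
        refine mul_le_mul_of_nonneg_right ?_ (sq_nonneg _)
        exact_mod_cast (Finset.card_le_card fun τ hτ => (Finset.mem_filter.mp hτ).2).trans_eq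
          (Finset.card_smul_finset σ _)
  calc expCyl ρ (Fi * B) (fun η => (f.localAvg Fi η - m) ^ 2)
      = ((Fi.card : ℝ)⁻¹) ^ 2 * ∑ σ ∈ Fi, ∑ τ ∈ Fi, cov σ τ := by
        simp only [hsq, expCyl_const_mul, expCyl_sum, cov]
    _ ≤ ((Fi.card : ℝ)⁻¹) ^ 2 * (Fi.card * K) := by
        gcongr
        simpa using Finset.sum_le_card_nsmul Fi _ K hrow
    _ = K / Fi.card := by field_simp

end LocalBundleV

theorem uniform_weak_lln_general {Γ : Type} [Group Γ] [DecidableEq Γ]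
    (S : Finset Γ)
    (f : LocalBundleV S) (F : ℕ → Finset Γ)
    (hcard : Tendsto (fun i => (F i).card) atTop atTop) :
    Tendsto (fun i : ℕ =>
        sSup ((fun ρ : ℝ =>
            expCyl ρ (F i * ballF S f.r)
              (fun η => |((F i).card : ℝ)⁻¹ * ∑ σ ∈ F i, f.f σ η - globalAvg f ρ|)) ''
          Set.Icc (0 : ℝ) 1))
      atTop (nhds 0) := by
  obtain ⟨M, hM⟩ := f.exists_abs_le
  set K : ℝ := ((ballF S f.r * (ballF S f.r)⁻¹).card : ℝ) * (2 * M) ^ 2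
  have hbound : Tendsto (fun i => Real.sqrt (K / (F i).card)) atTop (nhds 0) := by
    simpa only [Real.sqrt_zero, Function.comp_def] using (Real.continuous_sqrt.tendsto 0).comp
      ((tendsto_const_nhds (x := K)).div_atTop (tendsto_natCast_atTop_atTop.comp hcard))
  refine squeeze_zero' (Eventually.of_forall fun i => Real.sSup_nonneg ?_)
    ((hcard.eventually_gt_atTop 0).mono fun i hi => Real.sSup_le ?_ (Real.sqrt_nonneg _)) hbound
  · rintro _ ⟨ρ, hρ, rfl⟩
    exact expCyl_nonneg hρ _ fun η => abs_nonneg _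
  · rintro _ ⟨ρ, hρ, rfl⟩
    exact (expCyl_abs_le_sqrt hρ _ _).trans <| Real.sqrt_le_sqrt <|
      f.expCyl_sq_localAvg_sub_le hρ hM (Finset.card_pos.mp hi)

/-- **Uniform weak law of large numbers over Følner averages.** If `|F_i| → ∞`, then
`lim_{i→∞} sup_{ρ ∈ [0,1]} E_{ν_ρ} |f̄_{o,i} - ⟨f_o⟩(ρ)| = 0`. -/
theorem uniform_weak_lln {Γ : Type} [Group Γ] [DecidableEq Γ] [Infinite Γ]
    (S : Finset Γ) (hS_symm : ∀ s ∈ S, s⁻¹ ∈ S)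
    (hS_gen : Subgroup.closure (S : Set Γ) = ⊤)
    (f : LocalBundleV S) (F : ℕ → Finset Γ) (hne : ∀ i, (F i).Nonempty)
    (hcard : Tendsto (fun i => (F i).card) atTop atTop) :
    Tendsto (fun i : ℕ =>
        sSup ((fun ρ : ℝ =>
            expCyl ρ (F i * ballF S f.r)
              (fun η => |((F i).card : ℝ)⁻¹ * ∑ σ ∈ F i, f.f σ η - globalAvg f ρ|)) ''
          Set.Icc (0 : ℝ) 1))
      atTop (nhds 0) :=
  uniform_weak_lln_general S f F hcard

end Tower
end
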